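/- In the simplified dictionary-LASSO setting with the block partition T₁,…,T_J of T₀ᶜ, one has Σ_{j≥2} ‖(Zh)_{T_j}‖ ≤ 3·√(s/l)·‖(Zh)_{T₀}‖. -/

import Mathlib

/-!
Write `w = Zh`. Comparing the LASSO objective at `β̂` and at `β*` and bounding the cross term
`⟨Xh, Xβ* - y⟩ = ⟨Zh, (Z⁺)ᵀXᵀ(Xβ* - y)⟩` by `λ/2 · ‖w‖₁` gives the cone condition
`‖w_{T₀ᶜ}‖₁ ≤ 3‖w_{T₀}‖₁`. Since the blocks are sorted, every entry of `w` on `T_j` is at most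
the average of `|w|` over `T_{j-1}`, so `‖w_{T_j}‖ ≤ ‖w_{T_{j-1}}‖₁ / √l`; summing over `j ≥ 2`
gives `Σ_{j≥2} ‖w_{T_j}‖ ≤ ‖w_{T₀ᶜ}‖₁ / √l ≤ 3‖w_{T₀}‖₁ / √l`, and Cauchy–Schwarz on `T₀` gives
`‖w_{T₀}‖₁ ≤ √s ‖w_{T₀}‖`.
-/

open scoped BigOperators
open Matrix MeasureTheory ProbabilityTheory

/-- Euclidean norm of a vector in `ℝ^n`. -/
noncomputable def vnorm {n : ℕ} (v : Fin n → ℝ) : ℝ := Real.sqrt (∑ i, v i ^ 2)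

/-- ℓ¹ norm. -/
noncomputable def vnorm1 {n : ℕ} (v : Fin n → ℝ) : ℝ := ∑ i, |v i|

/-- ℓ∞ norm. -/
noncomputable def vnormInf {n : ℕ} (v : Fin n → ℝ) : ℝ := ⨆ i, |v i|

/-- Restriction of a vector to an index set: coordinates outside `T` are set to zero. -/
noncomputable def restr {m : ℕ} (T : Finset (Fin m)) (w : Fin m → ℝ) : Fin m → ℝ :=
  fun i => if i ∈ T then w i else 0

/-- Support of a vector. -/
noncomputable def suppSet {m : ℕ} (w : Fin m → ℝ) : Finset (Fin m) :=
  Finset.univ.filter (fun i => w i ≠ 0)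

/-- `𝓗(Y, k)`: all vectors `Y v` with `v` having at most `k` nonzero coordinates. -/
noncomputable def sparseCone {q t : ℕ} (Y : Matrix (Fin q) (Fin t) ℝ) (k : ℕ) :
    Set (Fin q → ℝ) :=
  {w | ∃ v : Fin t → ℝ, (Finset.univ.filter fun i => v i ≠ 0).card ≤ k ∧ w = Y.mulVec v}

/-- `ρ⁺_{Ψ,Y}(k)` (the `l₁ = 0` version). -/
noncomputable def rhoPlus0 {n q t : ℕ} (Ψ : Matrix (Fin n) (Fin q) ℝ)
    (Y : Matrix (Fin q) (Fin t) ℝ) (k : ℕ) : ℝ :=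
  sSup {x | ∃ w ∈ sparseCone Y k, w ≠ 0 ∧ x = vnorm (Ψ.mulVec w) ^ 2 / vnorm w ^ 2}

/-- `ρ⁻_{Ψ,Y}(k)` (the `l₁ = 0` version). -/
noncomputable def rhoMinus0 {n q t : ℕ} (Ψ : Matrix (Fin n) (Fin q) ℝ)
    (Y : Matrix (Fin q) (Fin t) ℝ) (k : ℕ) : ℝ :=
  sInf {x | ∃ w ∈ sparseCone Y k, w ≠ 0 ∧ x = vnorm (Ψ.mulVec w) ^ 2 / vnorm w ^ 2}

/-- `ρ⁺_{Ψ,Y}(l₁, k)`. -/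
noncomputable def rhoPlus {n l₁ q t : ℕ} (Ψ : Matrix (Fin n) (Fin (l₁ + q)) ℝ)
    (Y : Matrix (Fin q) (Fin t) ℝ) (k : ℕ) : ℝ :=
  sSup {x | ∃ (u : Fin l₁ → ℝ) (w : Fin q → ℝ), w ∈ sparseCone Y k ∧ Fin.append u w ≠ 0 ∧
    x = vnorm (Ψ.mulVec (Fin.append u w)) ^ 2 / vnorm (Fin.append u w) ^ 2}

/-- `ρ⁻_{Ψ,Y}(l₁, k)`. -/
noncomputable def rhoMinus {n l₁ q t : ℕ} (Ψ : Matrix (Fin n) (Fin (l₁ + q)) ℝ)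
    (Y : Matrix (Fin q) (Fin t) ℝ) (k : ℕ) : ℝ :=
  sInf {x | ∃ (u : Fin l₁ → ℝ) (w : Fin q → ℝ), w ∈ sparseCone Y k ∧ Fin.append u w ≠ 0 ∧
    x = vnorm (Ψ.mulVec (Fin.append u w)) ^ 2 / vnorm (Fin.append u w) ^ 2}

/-- Column concatenation `[P Q]`. -/
def hcat {n a b : ℕ} (P : Matrix (Fin n) (Fin a) ℝ) (Q : Matrix (Fin n) (Fin b) ℝ) :
    Matrix (Fin n) (Fin (a + b)) ℝ :=
  Matrix.of fun i => Fin.append (P i) (Q i)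

/-- Smallest singular value: `min_{‖v‖ = 1} ‖Z v‖`. -/
noncomputable def sigmaMin {m r : ℕ} (Z : Matrix (Fin m) (Fin r) ℝ) : ℝ :=
  sInf {x | ∃ v : Fin r → ℝ, vnorm v = 1 ∧ x = vnorm (Z.mulVec v)}

/-- Largest singular value: `max_{‖v‖ = 1} ‖Z v‖`. -/
noncomputable def sigmaMax {m r : ℕ} (Z : Matrix (Fin m) (Fin r) ℝ) : ℝ :=
  sSup {x | ∃ v : Fin r → ℝ, vnorm v = 1 ∧ x = vnorm (Z.mulVec v)}

open Finset

lemma vnorm_sq {k : ℕ} (v : Fin k → ℝ) : vnorm v ^ 2 = ∑ i, v i ^ 2 :=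
  Real.sq_sqrt (sum_nonneg fun _ _ => sq_nonneg _)

lemma vnorm_restr {k : ℕ} (T : Finset (Fin k)) (v : Fin k → ℝ) :
    vnorm (restr T v) = √(∑ i ∈ T, v i ^ 2) := by
  simp [vnorm, restr, ite_pow, sum_ite_mem]

lemma vnorm_add_sq {k : ℕ} (a b : Fin k → ℝ) :
    vnorm (a + b) ^ 2 = vnorm a ^ 2 + 2 * (a ⬝ᵥ b) + vnorm b ^ 2 := by
  simp only [vnorm_sq, dotProduct, Pi.add_apply, mul_sum, ← sum_add_distrib]
  exact sum_congr rfl fun i _ => by ring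

lemma abs_le_vnormInf {k : ℕ} (v : Fin k → ℝ) (i : Fin k) : |v i| ≤ vnormInf v :=
  le_ciSup (f := fun j => |v j|) (Finite.bddAbove_range _) i

lemma abs_dotProduct_le_mul_vnorm1 {k : ℕ} {c : ℝ} (g q : Fin k → ℝ) (hq : ∀ i, |q i| ≤ c) :
    |g ⬝ᵥ q| ≤ c * vnorm1 g :=
  calc |g ⬝ᵥ q| ≤ ∑ i, |g i * q i| := abs_sum_le_sum_abs _ _
    _ ≤ ∑ i, c * |g i| := sum_le_sum fun i _ => by
        rw [abs_mul, mul_comm c]; exact mul_le_mul_of_nonneg_left (hq i) (abs_nonneg _)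
    _ = c * vnorm1 g := (mul_sum ..).symm

lemma sum_abs_le_sqrt_card_mul_vnorm_restr {k : ℕ} (T : Finset (Fin k)) (v : Fin k → ℝ) :
    ∑ i ∈ T, |v i| ≤ √(#T) * vnorm (restr T v) := by
  rw [vnorm_restr, ← Real.sqrt_mul (Nat.cast_nonneg _)]
  refine Real.le_sqrt_of_sq_le ?_
  simpa only [sq_abs] using sq_sum_le_card_mul_sum_sq (s := T) (f := fun i => |v i|)

lemma vnorm1_sub_add_le_vnorm1_add {k : ℕ} {T : Finset (Fin k)} {a : Fin k → ℝ}
    (ha : ∀ i ∉ T, a i = 0) (g : Fin k → ℝ) :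
    vnorm1 a - ∑ i ∈ T, |g i| + ∑ i ∈ Tᶜ, |g i| ≤ vnorm1 (a + g) := by
  have hsupp : vnorm1 a = ∑ i ∈ T, |a i| := by
    rw [vnorm1, sum_subset (subset_univ T) fun i _ hi => by rw [ha i hi, abs_zero]]
  have hon : ∑ i ∈ T, |a i| - ∑ i ∈ T, |g i| ≤ ∑ i ∈ T, |a i + g i| := by
    rw [← sum_sub_distrib]
    exact sum_le_sum fun i _ => by
      have := abs_add_le (a i + g i) (-g i); rw [add_neg_cancel_right, abs_neg] at this; linarith
  have hoff : ∑ i ∈ Tᶜ, |a i + g i| = ∑ i ∈ Tᶜ, |g i| :=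
    sum_congr rfl fun i hi => by rw [ha i (mem_compl.mp hi), zero_add]
  rw [hsupp, vnorm1, ← sum_add_sum_compl T, ← hoff]
  simp only [Pi.add_apply]
  linarith

lemma Matrix.isUnit_transpose_mul_self_of_rank_eq {m r : ℕ} (Z : Matrix (Fin m) (Fin r) ℝ)
    (hZ : Z.rank = r) : IsUnit (Zᵀ * Z) := by
  rw [← Matrix.mulVec_surjective_iff_isUnit, ← Matrix.coe_mulVecLin, ← LinearMap.range_eq_top]
  apply Submodule.eq_top_of_finrank_eq
  rw [← Matrix.rank, rank_transpose_mul_self, hZ, Module.finrank_fin_fun]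

lemma dotProduct_mulVec_transpose_of_mul_eq_one {n r m : ℕ} {Z : Matrix (Fin m) (Fin r) ℝ}
    {Zp : Matrix (Fin r) (Fin m) ℝ} (hZpZ : Zp * Z = 1) (X : Matrix (Fin n) (Fin r) ℝ)
    (h : Fin r → ℝ) (u : Fin n → ℝ) :
    Z *ᵥ h ⬝ᵥ Zpᵀ *ᵥ (Xᵀ *ᵥ u) = X *ᵥ h ⬝ᵥ u := by
  rw [dotProduct_mulVec, vecMul_transpose, mulVec_mulVec, hZpZ, one_mulVec,
    dotProduct_mulVec, vecMul_transpose]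

theorem sum_compl_abs_le_three_mul_of_lasso {n r m : ℕ} (X : Matrix (Fin n) (Fin r) ℝ)
    {Z : Matrix (Fin m) (Fin r) ℝ} {Zp : Matrix (Fin r) (Fin m) ℝ} (hZpZ : Zp * Z = 1)
    (y : Fin n → ℝ) {lam : ℝ} (hlam : 0 < lam) (βstar βhat : Fin r → ℝ)
    (hopt : (1 / 2) * vnorm (X *ᵥ βhat - y) ^ 2 + lam * vnorm1 (Z *ᵥ βhat) ≤
      (1 / 2) * vnorm (X *ᵥ βstar - y) ^ 2 + lam * vnorm1 (Z *ᵥ βstar))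
    {T₀ : Finset (Fin m)} (hT₀ : ∀ i ∉ T₀, (Z *ᵥ βstar) i = 0)
    (hfeas : ∀ i, |(Zpᵀ *ᵥ (Xᵀ *ᵥ (X *ᵥ βstar - y))) i| ≤ lam / 2) :
    ∑ i ∈ T₀ᶜ, |(Z *ᵥ (βhat - βstar)) i| ≤ 3 * ∑ i ∈ T₀, |(Z *ᵥ (βhat - βstar)) i| := by
  set h := βhat - βstar
  set u := X *ᵥ βstar - y
  have hβhat : βhat = βstar + h := by simp [h]
  have hresid : X *ᵥ βhat - y = X *ᵥ h + u := by
    simp only [u, hβhat, mulVec_add]; abel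
  have hcross : -(lam / 2 * vnorm1 (Z *ᵥ h)) ≤ X *ᵥ h ⬝ᵥ u := by
    rw [← dotProduct_mulVec_transpose_of_mul_eq_one hZpZ]
    exact neg_le_of_abs_le (abs_dotProduct_le_mul_vnorm1 _ _ hfeas)
  have hl1 := vnorm1_sub_add_le_vnorm1_add hT₀ (Z *ᵥ h)
  rw [← mulVec_add, ← hβhat] at hl1
  have hsplit : vnorm1 (Z *ᵥ h) = ∑ i ∈ T₀, |(Z *ᵥ h) i| + ∑ i ∈ T₀ᶜ, |(Z *ᵥ h) i| :=
    (sum_add_sum_compl _ _).symm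
  rw [hresid, vnorm_add_sq] at hopt
  nlinarith [sq_nonneg (vnorm (X *ᵥ h))]

lemma vnorm_restr_le_sum_abs_div_sqrt {m l : ℕ} (hl : 0 < l) (w : Fin m → ℝ)
    {S S' : Finset (Fin m)} (hS : l ≤ #S) (hS' : #S' ≤ l)
    (hle : ∀ a ∈ S', ∀ b ∈ S, |w a| ≤ |w b|) :
    vnorm (restr S' w) ≤ (∑ b ∈ S, |w b|) / √l := by
  set M := (∑ b ∈ S, |w b|) / l
  have hll : (0 : ℝ) < l := Nat.cast_pos.mpr hl
  have hM : ∀ a ∈ S', |w a| ≤ M := fun a ha => by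
    rw [le_div_iff₀ hll]
    calc |w a| * l ≤ #S * |w a| := by
          rw [mul_comm]; gcongr
      _ = ∑ _b ∈ S, |w a| := by rw [sum_const, nsmul_eq_mul]
      _ ≤ ∑ b ∈ S, |w b| := sum_le_sum (hle a ha)
  have hsq : ∑ a ∈ S', w a ^ 2 ≤ (∑ b ∈ S, |w b|) ^ 2 / l :=
    calc ∑ a ∈ S', w a ^ 2 ≤ ∑ _a ∈ S', M ^ 2 := sum_le_sum fun a ha => by
          rw [← sq_abs]; exact pow_le_pow_left₀ (abs_nonneg _) (hM a ha) 2
      _ = #S' * M ^ 2 := by rw [sum_const, nsmul_eq_mul]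
      _ ≤ l * M ^ 2 := by gcongr
      _ = (∑ b ∈ S, |w b|) ^ 2 / l := by simp only [M]; field_simp
  rw [vnorm_restr, ← Real.sqrt_sq (sum_nonneg fun b _ => abs_nonneg (w b)),
    ← Real.sqrt_div' _ hll.le]
  exact Real.sqrt_le_sqrt hsq

lemma sum_Icc_two_pred_le_sum_Icc_one {J : ℕ} {F : ℕ → ℝ} (hF : ∀ k, 0 ≤ F k) :
    ∑ j ∈ Icc 2 J, F (j - 1) ≤ ∑ k ∈ Icc 1 J, F k := by
  rw [← sum_image (g := (· - 1)) fun i hi j hj hij => by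
    simp only [coe_Icc, Set.mem_Icc] at hi hj; simp only at hij; omega]
  exact sum_le_sum_of_subset_of_nonneg (fun k hk => by
    simp only [mem_image, mem_Icc] at hk ⊢; omega) fun k _ _ => hF k

theorem sum_vnorm_restr_blocks_le {m l J : ℕ} (hl : 0 < l) (w : Fin m → ℝ)
    (T : ℕ → Finset (Fin m))
    (hDisj : ∀ i ∈ Icc 1 J, ∀ j ∈ Icc 1 J, i ≠ j → Disjoint (T i) (T j))
    (hCard : ∀ j, 1 ≤ j → j < J → #(T j) = l) (hCardLast : #(T J) ≤ l)
    (hOrder : ∀ j, 2 ≤ j → j ≤ J → ∀ a ∈ T j, ∀ b ∈ T (j - 1), |w a| ≤ |w b|) :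
    ∑ j ∈ Icc 2 J, vnorm (restr (T j) w) ≤ (∑ i ∈ (Icc 1 J).biUnion T, |w i|) / √l := by
  have hblock : ∀ j ∈ Icc 2 J, vnorm (restr (T j) w) ≤ (∑ b ∈ T (j - 1), |w b|) / √l := by
    intro j hj
    obtain ⟨hj2, hjJ⟩ := mem_Icc.mp hj
    have hcard : #(T j) ≤ l := by
      rcases hjJ.eq_or_lt with rfl | hlt
      exacts [hCardLast, (hCard j (by omega) hlt).le]
    exact vnorm_restr_le_sum_abs_div_sqrt hl w (hCard (j - 1) (by omega) (by omega)).ge hcard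
      (hOrder j hj2 hjJ)
  have hpd : Set.PairwiseDisjoint (Icc 1 J : Set ℕ) T := fun i hi j hj hij =>
    hDisj i (mem_coe.mp hi) j (mem_coe.mp hj) hij
  calc ∑ j ∈ Icc 2 J, vnorm (restr (T j) w)
      ≤ ∑ j ∈ Icc 2 J, (∑ b ∈ T (j - 1), |w b|) / √l := sum_le_sum hblock
    _ = (∑ j ∈ Icc 2 J, ∑ b ∈ T (j - 1), |w b|) / √l := (sum_div ..).symm
    _ ≤ (∑ k ∈ Icc 1 J, ∑ b ∈ T k, |w b|) / √l := by
        gcongr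
        exact sum_Icc_two_pred_le_sum_Icc_one fun k => sum_nonneg fun b _ => abs_nonneg (w b)
    _ = (∑ i ∈ (Icc 1 J).biUnion T, |w i|) / √l := by rw [sum_biUnion hpd]

theorem statement2_general {n r m : ℕ}
    (X : Matrix (Fin n) (Fin r) ℝ) (Z : Matrix (Fin m) (Fin r) ℝ)
    (hZrank : Z.rank = r)
    (Zp : Matrix (Fin r) (Fin m) ℝ) (hZp : Zp = (Zᵀ * Z)⁻¹ * Zᵀ)
    (y : Fin n → ℝ) (lam : ℝ) (hlam : 0 < lam)
    (βstar βhat : Fin r → ℝ)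
    (hmin : ∀ β : Fin r → ℝ,
      (1 / 2) * vnorm (X.mulVec βhat - y) ^ 2 + lam * vnorm1 (Z.mulVec βhat) ≤
        (1 / 2) * vnorm (X.mulVec β - y) ^ 2 + lam * vnorm1 (Z.mulVec β))
    (h : Fin r → ℝ) (hh : h = βhat - βstar)
    (T₀ : Finset (Fin m)) (hT₀ : T₀ = suppSet (Z.mulVec βstar))
    (s : ℕ) (hs : s = T₀.card)
    (hfeas : vnormInf (Zpᵀ.mulVec (Xᵀ.mulVec (X.mulVec βstar - y))) < lam / 2)
    -- the block partition of `T₀ᶜ` into `T 1, …, T J`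
    (l : ℕ) (hl : 0 < l) (J : ℕ) (T : ℕ → Finset (Fin m))
    (hUnion : (Finset.Icc 1 J).biUnion T = T₀ᶜ)
    (hDisj : ∀ i ∈ Finset.Icc 1 J, ∀ j ∈ Finset.Icc 1 J, i ≠ j → Disjoint (T i) (T j))
    (hCard : ∀ j, 1 ≤ j → j < J → (T j).card = l)
    (hCardLast : (T J).card ≤ l)
    (hOrder : ∀ j, 2 ≤ j → j ≤ J → ∀ a ∈ T j, ∀ b ∈ T (j - 1),
      |Z.mulVec h a| ≤ |Z.mulVec h b|) :
    ∑ j ∈ Finset.Icc 2 J, vnorm (restr (T j) (Z.mulVec h)) ≤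
      3 * Real.sqrt ((s : ℝ) / (l : ℝ)) * vnorm (restr T₀ (Z.mulVec h)) := by
  have hZpZ : Zp * Z = 1 := by
    rw [hZp, Matrix.mul_assoc]
    exact nonsing_inv_mul _ ((isUnit_iff_isUnit_det _).mp
      (Z.isUnit_transpose_mul_self_of_rank_eq hZrank))
  have hcone := sum_compl_abs_le_three_mul_of_lasso X (T₀ := T₀) hZpZ y hlam βstar βhat
    (hmin βstar) (fun i hi => by simpa [hT₀, suppSet] using hi)
    fun i => (abs_le_vnormInf _ i).trans hfeas.le
  have hCS := sum_abs_le_sqrt_card_mul_vnorm_restr T₀ (Z *ᵥ h)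
  rw [← hh] at hcone
  rw [← hs] at hCS
  calc ∑ j ∈ Icc 2 J, vnorm (restr (T j) (Z *ᵥ h))
      ≤ (∑ i ∈ T₀ᶜ, |(Z *ᵥ h) i|) / √l :=
        hUnion ▸ sum_vnorm_restr_blocks_le hl _ T hDisj hCard hCardLast hOrder
    _ ≤ 3 * (√s * vnorm (restr T₀ (Z *ᵥ h))) / √l := by gcongr; linarith
    _ = 3 * √(s / l) * vnorm (restr T₀ (Z *ᵥ h)) := by
        rw [Real.sqrt_div (Nat.cast_nonneg s)]; ring

/-- In the simplified dictionary-LASSO setting with the block partition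
`T₁, …, T_J` of `T₀ᶜ`, one has `Σ_{j≥2} ‖(Zh)_{T_j}‖ ≤ 3·√(s/l)·‖(Zh)_{T₀}‖`. -/
theorem statement2 {n r m : ℕ} (hn : 0 < n) (hr : 0 < r) (hm : 0 < m)
    (X : Matrix (Fin n) (Fin r) ℝ) (Z : Matrix (Fin m) (Fin r) ℝ)
    (hZrank : Z.rank = r)
    (Zp : Matrix (Fin r) (Fin m) ℝ) (hZp : Zp = (Zᵀ * Z)⁻¹ * Zᵀ)
    (y : Fin n → ℝ) (lam : ℝ) (hlam : 0 < lam)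
    (βstar βhat : Fin r → ℝ)
    (hmin : ∀ β : Fin r → ℝ,
      (1 / 2) * vnorm (X.mulVec βhat - y) ^ 2 + lam * vnorm1 (Z.mulVec βhat) ≤
        (1 / 2) * vnorm (X.mulVec β - y) ^ 2 + lam * vnorm1 (Z.mulVec β))
    (h : Fin r → ℝ) (hh : h = βhat - βstar)
    (T₀ : Finset (Fin m)) (hT₀ : T₀ = suppSet (Z.mulVec βstar))
    (s : ℕ) (hs : s = T₀.card) (hs1 : 1 ≤ s)
    (hfeas : vnormInf (Zpᵀ.mulVec (Xᵀ.mulVec (X.mulVec βstar - y))) < lam / 2)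
    -- the block partition of `T₀ᶜ` into `T 1, …, T J`
    (l : ℕ) (hl : 0 < l) (J : ℕ) (hJ : 1 ≤ J) (T : ℕ → Finset (Fin m))
    (hUnion : (Finset.Icc 1 J).biUnion T = T₀ᶜ)
    (hDisj : ∀ i ∈ Finset.Icc 1 J, ∀ j ∈ Finset.Icc 1 J, i ≠ j → Disjoint (T i) (T j))
    (hCard : ∀ j, 1 ≤ j → j < J → (T j).card = l)
    (hCardLast : (T J).card ≤ l)
    (hOrder : ∀ j, 2 ≤ j → j ≤ J → ∀ a ∈ T j, ∀ b ∈ T (j - 1),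
      |Z.mulVec h a| ≤ |Z.mulVec h b|) :
    ∑ j ∈ Finset.Icc 2 J, vnorm (restr (T j) (Z.mulVec h)) ≤
      3 * Real.sqrt ((s : ℝ) / (l : ℝ)) * vnorm (restr T₀ (Z.mulVec h)) :=
  statement2_general X Z hZrank Zp hZp y lam hlam βstar βhat hmin h hh T₀ hT₀ s hs hfeas l hl J T
    hUnion hDisj hCard hCardLast hOrder
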